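/- Let N ≥ 2, s ∈ (0,1), β < N, and let t ∈ [-1,1) (playing the role of ⟨σ,η⟩). Then the improper integral ∫_1^∞ (τ^{-β} - 1) τ^{N-1} / (1 + τ² - 2τt)^{N/2+s} dτ equals -∫_0^1 (τ^{-β} - 1) τ^{N-1+c_s} / (1 + τ² - 2τt)^{N/2+s} dτ, where c_s := β + 2s - N. Consequently, B(t) := ∫_0^∞ (τ^{-β} - 1) τ^{N-1} / (1 + τ² - 2τt)^{N/2+s} dτ = ∫_0^1 (τ^{-β} - 1)(τ^{N-1} - τ^{N-1+c_s}) / (1 + τ² - 2τt)^{N/2+s} dτ. -/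

import Mathlib

/-!
The substitution `τ ↦ τ⁻¹` maps `(1, ∞)` onto `(0, 1)`, turns `1 + τ² - 2τt` into
`(1 + τ² - 2τt) / τ²` and `τ ^ (-β) - 1` into `-τ ^ β (τ ^ (-β) - 1)`; collecting the powers of `τ`
gives the first identity. On `(0, 1)` the integrand is integrable (the denominator is bounded
away from `0` since `t < 1`, and `τ ^ (N - 1 - β)` is integrable since `β < N`), so splitting
`(0, ∞)` at `1` gives the second one; if the integrand is not integrable on `(1, ∞)`, then neither
side of the second identity is integrable.
-/

open MeasureTheory Set

open scoped Pointwise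

lemma one_add_sq_sub_two_mul_pos {t τ : ℝ} (ht : t < 1) (hτ : 0 ≤ τ) :
    0 < 1 + τ ^ 2 - 2 * τ * t := by
  nlinarith [sq_nonneg (1 - τ), mul_nonneg hτ (sub_nonneg.2 ht.le)]

lemma one_add_inv_sq_sub_two_mul {t x : ℝ} (hx : x ≠ 0) :
    1 + x⁻¹ ^ 2 - 2 * x⁻¹ * t = (1 + x ^ 2 - 2 * x * t) / x ^ 2 := by
  field_simp
  ring

noncomputable def radialIntegrand (β a p t τ : ℝ) : ℝ :=
  (τ ^ (-β) - 1) * τ ^ a / (1 + τ ^ 2 - 2 * τ * t) ^ p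

lemma inv_sq_mul_radialIntegrand_inv {β a p t x : ℝ} (ht : t < 1) (hx : 0 < x) :
    (x ^ 2)⁻¹ * radialIntegrand β a p t x⁻¹ = -radialIntegrand β (β + 2 * p - 2 - a) p t x := by
  have hQ := one_add_sq_sub_two_mul_pos ht hx.le
  have hsq : (x ^ 2) ^ p = x ^ (2 * p) := by
    rw [← Real.rpow_natCast, ← Real.rpow_mul hx.le]; norm_num
  have hinv : (x ^ 2)⁻¹ = x ^ (-2 : ℝ) := by
    rw [← Real.rpow_natCast, ← Real.rpow_neg hx.le]; norm_num
  rw [radialIntegrand, radialIntegrand, one_add_inv_sq_sub_two_mul hx.ne',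
    Real.div_rpow hQ.le (sq_nonneg x), Real.inv_rpow hx.le, Real.inv_rpow hx.le,
    ← Real.rpow_neg hx.le, ← Real.rpow_neg hx.le, neg_neg, hsq, hinv]
  field_simp
  simp only [sub_mul, mul_sub, one_mul, mul_one, ← Real.rpow_add hx]
  ring_nf

lemma integrableOn_radialIntegrand_Ioo_zero_one {β a p t : ℝ} (ha : -1 < a) (haβ : -1 < a - β)
    (ht : t < 1) : IntegrableOn (radialIntegrand β a p t) (Ioo 0 1) := by
  have hnum : IntegrableOn (fun τ : ℝ => τ ^ (a - β) - τ ^ a) (Ioo 0 1) :=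
    ((intervalIntegral.intervalIntegrable_rpow' haβ).1.sub
      (intervalIntegral.intervalIntegrable_rpow' ha).1).mono_set Ioo_subset_Ioc_self
  have hden : ContinuousOn (fun τ : ℝ => ((1 + τ ^ 2 - 2 * τ * t) ^ p)⁻¹) (Icc 0 1) := by
    refine ContinuousOn.inv₀ (ContinuousOn.rpow_const (by fun_prop) fun τ hτ => ?_) fun τ hτ => ?_
    · exact Or.inl (one_add_sq_sub_two_mul_pos ht hτ.1).ne'
    · exact (Real.rpow_pos_of_pos (one_add_sq_sub_two_mul_pos ht hτ.1) p).ne'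
  refine (hnum.mul_continuousOn_of_subset hden measurableSet_Ioo isCompact_Icc
    Ioo_subset_Icc_self).congr_fun (fun τ hτ => ?_) measurableSet_Ioo
  rw [radialIntegrand, div_eq_mul_inv, sub_mul, one_mul, ← Real.rpow_add hτ.1, neg_add_eq_sub]

lemma image_inv_Ioo_zero_one : (fun x : ℝ => x⁻¹) '' Ioo 0 1 = Ioi 1 := by
  rw [Set.image_inv_eq_inv, Set.inv_Ioo_0_left one_pos, inv_one]

lemma hasDerivWithinAt_inv_Ioo_zero_one :
    ∀ x ∈ Ioo (0 : ℝ) 1, HasDerivWithinAt (fun y : ℝ => y⁻¹) (-(x ^ 2)⁻¹) (Ioo 0 1) x :=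
  fun _ hx => (hasDerivAt_inv hx.1.ne').hasDerivWithinAt

lemma abs_neg_inv_sq (x : ℝ) : |-(x ^ 2)⁻¹| = (x ^ 2)⁻¹ := by
  rw [abs_neg, abs_of_nonneg (inv_nonneg.2 (sq_nonneg x))]

variable {E : Type*} [NormedAddCommGroup E] [NormedSpace ℝ E]

theorem integral_Ioi_one_eq_integral_Ioo_inv (f : ℝ → E) :
    ∫ x in Ioi 1, f x = ∫ x in Ioo 0 1, (x ^ 2)⁻¹ • f x⁻¹ := by
  simp_rw [← image_inv_Ioo_zero_one, integral_image_eq_integral_abs_deriv_smul measurableSet_Ioo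
    hasDerivWithinAt_inv_Ioo_zero_one inv_injective.injOn, abs_neg_inv_sq]

theorem integrableOn_Ioi_one_iff_integrableOn_Ioo_inv (f : ℝ → E) :
    IntegrableOn f (Ioi 1) ↔ IntegrableOn (fun x => (x ^ 2)⁻¹ • f x⁻¹) (Ioo 0 1) := by
  simp_rw [← image_inv_Ioo_zero_one, integrableOn_image_iff_integrableOn_abs_deriv_smul
    measurableSet_Ioo hasDerivWithinAt_inv_Ioo_zero_one inv_injective.injOn, abs_neg_inv_sq]

theorem integral_Ioi_zero_eq_integral_Ioo_sub {f g : ℝ → E} (hf : IntegrableOn f (Ioo 0 1))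
    (hfg : IntegrableOn f (Ioi 1) ↔ IntegrableOn g (Ioo 0 1))
    (heq : ∫ x in Ioi 1, f x = -∫ x in Ioo 0 1, g x) :
    ∫ x in Ioi 0, f x = ∫ x in Ioo 0 1, f x - g x := by
  by_cases hf1 : IntegrableOn f (Ioi 1)
  · rw [← Ioc_union_Ioi_eq_Ioi zero_le_one, setIntegral_union (Ioc_disjoint_Ioi le_rfl)
      measurableSet_Ioi (by rwa [integrableOn_Ioc_iff_integrableOn_Ioo]) hf1,
      integral_Ioc_eq_integral_Ioo, heq, integral_sub hf (hfg.1 hf1), sub_eq_add_neg]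
  · have hfg' : ¬ IntegrableOn (fun x => f x - g x) (Ioo 0 1) := fun h =>
      hf1 (hfg.2 ((hf.sub h).congr_fun (fun x _ => sub_sub_cancel _ _) measurableSet_Ioo))
    have hf0 : ¬ IntegrableOn f (Ioi 0) := fun h => hf1 (h.mono_set (Ioi_subset_Ioi zero_le_one))
    rw [integral_undef hfg', integral_undef hf0]

theorem stmt0_general (N s β t : ℝ) (hN : 2 ≤ N)
    (hβ : β < N) (ht : t ∈ Set.Ico (-1:ℝ) 1) :
    (∫ τ in Set.Ioi (1:ℝ),
        (τ ^ (-β) - 1) * τ ^ (N - 1) / (1 + τ ^ 2 - 2 * τ * t) ^ (N / 2 + s))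
      = -∫ τ in Set.Ioo (0:ℝ) 1,
        (τ ^ (-β) - 1) * τ ^ (N - 1 + (β + 2 * s - N)) /
          (1 + τ ^ 2 - 2 * τ * t) ^ (N / 2 + s) ∧
    (∫ τ in Set.Ioi (0:ℝ),
        (τ ^ (-β) - 1) * τ ^ (N - 1) / (1 + τ ^ 2 - 2 * τ * t) ^ (N / 2 + s))
      = ∫ τ in Set.Ioo (0:ℝ) 1,
        (τ ^ (-β) - 1) * (τ ^ (N - 1) - τ ^ (N - 1 + (β + 2 * s - N))) /
          (1 + τ ^ 2 - 2 * τ * t) ^ (N / 2 + s) := by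
  have hinv : ∀ x ∈ Ioo (0 : ℝ) 1, (x ^ 2)⁻¹ • radialIntegrand β (N - 1) (N / 2 + s) t x⁻¹ =
      -radialIntegrand β (N - 1 + (β + 2 * s - N)) (N / 2 + s) t x := fun x hx => by
    rw [smul_eq_mul, inv_sq_mul_radialIntegrand_inv ht.2 hx.1]
    ring_nf
  have hIoi_one : ∫ τ in Ioi 1, radialIntegrand β (N - 1) (N / 2 + s) t τ =
      -∫ τ in Ioo 0 1, radialIntegrand β (N - 1 + (β + 2 * s - N)) (N / 2 + s) t τ := by
    rw [integral_Ioi_one_eq_integral_Ioo_inv, setIntegral_congr_fun measurableSet_Ioo hinv,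
      integral_neg]
  have hint : IntegrableOn (radialIntegrand β (N - 1) (N / 2 + s) t) (Ioi 1) ↔
      IntegrableOn (radialIntegrand β (N - 1 + (β + 2 * s - N)) (N / 2 + s) t) (Ioo 0 1) := by
    rw [integrableOn_Ioi_one_iff_integrableOn_Ioo_inv,
      integrableOn_congr_fun hinv measurableSet_Ioo]
    exact integrable_neg_iff
  have hIoi_zero := integral_Ioi_zero_eq_integral_Ioo_sub
    (integrableOn_radialIntegrand_Ioo_zero_one (by linarith) (by linarith) ht.2) hint hIoi_one
  refine ⟨hIoi_one, hIoi_zero.trans (integral_congr_ae (ae_of_all _ fun τ => ?_))⟩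
  simp only [radialIntegrand, mul_sub, sub_div]

theorem stmt0 (N s β t : ℝ) (hN : 2 ≤ N) (hs : s ∈ Set.Ioo (0:ℝ) 1)
    (hβ : β < N) (ht : t ∈ Set.Ico (-1:ℝ) 1) :
    (∫ τ in Set.Ioi (1:ℝ),
        (τ ^ (-β) - 1) * τ ^ (N - 1) / (1 + τ ^ 2 - 2 * τ * t) ^ (N / 2 + s))
      = -∫ τ in Set.Ioo (0:ℝ) 1,
        (τ ^ (-β) - 1) * τ ^ (N - 1 + (β + 2 * s - N)) /
          (1 + τ ^ 2 - 2 * τ * t) ^ (N / 2 + s) ∧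
    (∫ τ in Set.Ioi (0:ℝ),
        (τ ^ (-β) - 1) * τ ^ (N - 1) / (1 + τ ^ 2 - 2 * τ * t) ^ (N / 2 + s))
      = ∫ τ in Set.Ioo (0:ℝ) 1,
        (τ ^ (-β) - 1) * (τ ^ (N - 1) - τ ^ (N - 1 + (β + 2 * s - N))) /
          (1 + τ ^ 2 - 2 * τ * t) ^ (N / 2 + s) :=
  stmt0_general N s β t hN hβ ht
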